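/- arXiv:0809.4612 — 4 statements merged into one kernel-verified Lean document; each statement's English description precedes it below -/
import Mathlib

section
/- Let H > 0 and 0 < R ≤ π/H. Let l : [0,R] → ℝ be twice continuously differentiable with l(0) = 0, l'(0) = 2π, and l''(r) ≥ −H² l(r) for all r ∈ [0,R]. If there exists r₀ ∈ (0,R] with r₀ < π/H such that l(r₀) = (2π/H) sin(H r₀), then l(r) = (2π/H) sin(Hr) for all r ∈ [0, r₀]. -/
/-!
Put `u = l - (2π/H) sin (H ·)`, so that `u(0) = u'(0) = u(r₀) = 0` and `u'' + H² u ≥ 0`.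
Against `v = sin (H ·)`, which is positive on `(0, r₀]` because `H r₀ < π`, the Wronskian
`u' v - u v'` starts at `0` and has derivative `(u'' + H² u) v ≥ 0`, so `u / v` increases on
`(0, r₀]` up to `u(r₀) / v(r₀) = 0`; hence `u ≤ 0`. Then `u'' ≥ -H² u ≥ 0`, and `u(0) = u'(0) = 0`
give `u ≥ 0`.
-/

open Real Set

theorem monotoneOn_of_hasDerivAt_nonneg {D : Set ℝ} (hD : Convex ℝ D) {f f' : ℝ → ℝ}
    (hf : ∀ x ∈ D, HasDerivAt f (f' x) x) (hf'₀ : ∀ x ∈ interior D, 0 ≤ f' x) :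
    MonotoneOn f D :=
  monotoneOn_of_hasDerivWithinAt_nonneg hD (fun x hx ↦ (hf x hx).continuousAt.continuousWithinAt)
    (fun x hx ↦ (hf x (interior_subset hx)).hasDerivWithinAt) hf'₀

section Wronskian

variable {D : Set ℝ} {u u' u'' v v' q : ℝ → ℝ}

theorem monotoneOn_wronskian (hD : Convex ℝ D)
    (hu : ∀ x ∈ D, HasDerivAt u (u' x) x) (hu' : ∀ x ∈ D, HasDerivAt u' (u'' x) x)
    (hv : ∀ x ∈ D, HasDerivAt v (v' x) x) (hv' : ∀ x ∈ D, HasDerivAt v' (-(q x * v x)) x)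
    (hu'' : ∀ x ∈ D, -(q x * u x) ≤ u'' x) (hv₀ : ∀ x ∈ D, 0 ≤ v x) :
    MonotoneOn (fun x ↦ u' x * v x - u x * v' x) D := by
  refine monotoneOn_of_hasDerivAt_nonneg (f' := fun x ↦ (u'' x + q x * u x) * v x) hD
    (fun x hx ↦ ?_) fun x hx ↦ ?_
  · exact ((hu' x hx).mul (hv x hx)).sub ((hu x hx).mul (hv' x hx)) |>.congr_deriv (by ring)
  · have hx := interior_subset hx
    exact mul_nonneg (by linarith [hu'' x hx]) (hv₀ x hx)

theorem monotoneOn_div_of_wronskian_nonneg (hD : Convex ℝ D)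
    (hu : ∀ x ∈ D, HasDerivAt u (u' x) x) (hv : ∀ x ∈ D, HasDerivAt v (v' x) x)
    (hv₀ : ∀ x ∈ D, v x ≠ 0) (hW : ∀ x ∈ interior D, 0 ≤ u' x * v x - u x * v' x) :
    MonotoneOn (fun x ↦ u x / v x) D :=
  monotoneOn_of_hasDerivAt_nonneg hD (fun x hx ↦ (hu x hx).div (hv x hx) (hv₀ x hx))
    fun x hx ↦ div_nonneg (hW x hx) (sq_nonneg _)

end Wronskian

section SineComparison

variable {H : ℝ}

theorem hasDerivAt_sin_mul (x : ℝ) :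
    HasDerivAt (fun x ↦ sin (H * x)) (H * cos (H * x)) x :=
  ((hasDerivAt_id' x).const_mul H).sin.congr_deriv (by ring)

theorem hasDerivAt_cos_mul (x : ℝ) :
    HasDerivAt (fun x ↦ cos (H * x)) (-(H * sin (H * x))) x :=
  ((hasDerivAt_id' x).const_mul H).cos.congr_deriv (by ring)

variable {b : ℝ} {u u' u'' : ℝ → ℝ}

theorem nonpos_of_sin_comparison (hH : 0 < H) (hbH : H * b < π)
    (hu : ∀ x, HasDerivAt u (u' x) x) (hu' : ∀ x, HasDerivAt u' (u'' x) x)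
    (hu₀ : u 0 = 0) (hub : u b = 0) (hu'' : ∀ x ∈ Icc 0 b, -(H ^ 2 * u x) ≤ u'' x) :
    ∀ x ∈ Icc 0 b, u x ≤ 0 := by
  have hHx : ∀ {x}, x ≤ b → H * x < π := fun hx ↦ by nlinarith
  have hsin_pos : ∀ x ∈ Ioc 0 b, 0 < sin (H * x) := fun x hx ↦
    sin_pos_of_pos_of_lt_pi (mul_pos hH hx.1) (hHx hx.2)
  have hW := monotoneOn_wronskian (convex_Icc 0 b) (fun x _ ↦ hu x) (fun x _ ↦ hu' x)
    (fun x _ ↦ hasDerivAt_sin_mul x) (q := fun _ ↦ H ^ 2)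
    (fun x _ ↦ ((hasDerivAt_cos_mul x).const_mul H).congr_deriv (by ring)) hu''
    fun x hx ↦ sin_nonneg_of_nonneg_of_le_pi (by nlinarith [hx.1]) (hHx hx.2).le
  intro x hx
  obtain rfl | hx₀ := hx.1.eq_or_lt
  · exact hu₀.le
  have hratio := monotoneOn_div_of_wronskian_nonneg (convex_Ioc 0 b) (fun x _ ↦ hu x)
    (fun x _ ↦ hasDerivAt_sin_mul x) (fun x hx ↦ (hsin_pos x hx).ne') fun y hy ↦ by
      rw [interior_Ioc] at hy
      have hy := hW (left_mem_Icc.2 (hx.1.trans hx.2)) (Ioo_subset_Icc_self hy) hy.1.le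
      simpa [hu₀] using hy
  have := hratio ⟨hx₀, hx.2⟩ ⟨hx₀.trans_le hx.2, le_rfl⟩ hx.2
  simp only [hub, zero_div] at this
  simpa using (div_le_iff₀ (hsin_pos x ⟨hx₀, hx.2⟩)).1 this

end SineComparison

theorem nonneg_of_second_deriv_nonneg {a b : ℝ} {u u' u'' : ℝ → ℝ}
    (hu : ∀ x, HasDerivAt u (u' x) x) (hu' : ∀ x, HasDerivAt u' (u'' x) x)
    (hu₀ : u a = 0) (hu'₀ : u' a = 0) (hu'' : ∀ x ∈ Icc a b, 0 ≤ u'' x) :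
    ∀ x ∈ Icc a b, 0 ≤ u x := by
  have hu'_mono := monotoneOn_of_hasDerivAt_nonneg (convex_Icc a b) (fun x _ ↦ hu' x)
    fun x hx ↦ hu'' x (interior_subset hx)
  have hu_mono := monotoneOn_of_hasDerivAt_nonneg (convex_Icc a b) (fun x _ ↦ hu x)
    fun x hx ↦ by
      have hx := interior_subset hx
      simpa [hu'₀] using hu'_mono (left_mem_Icc.2 (hx.1.trans hx.2)) hx hx.1
  intro x hx
  simpa [hu₀] using hu_mono (left_mem_Icc.2 (hx.1.trans hx.2)) hx hx.1

theorem eqOn_zero_of_sin_comparison {H b : ℝ} {u u' u'' : ℝ → ℝ} (hH : 0 < H) (hbH : H * b < π)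
    (hu : ∀ x, HasDerivAt u (u' x) x) (hu' : ∀ x, HasDerivAt u' (u'' x) x)
    (hu₀ : u 0 = 0) (hu'₀ : u' 0 = 0) (hub : u b = 0)
    (hu'' : ∀ x ∈ Icc 0 b, -(H ^ 2 * u x) ≤ u'' x) :
    EqOn u 0 (Icc 0 b) := by
  have hnonpos := nonpos_of_sin_comparison hH hbH hu hu' hu₀ hub hu''
  have hnonneg := nonneg_of_second_deriv_nonneg hu hu' hu₀ hu'₀ fun x hx ↦ by
    nlinarith [hu'' x hx, hnonpos x hx, sq_nonneg H]
  exact fun x hx ↦ le_antisymm (hnonpos x hx) (hnonneg x hx)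

theorem length_lower_bound_rigidity_general
    (H R : ℝ) (hH : 0 < H)
    (l : ℝ → ℝ) (hl : ContDiff ℝ 2 l)
    (hl0 : l 0 = 0) (hl'0 : deriv l 0 = 2 * π)
    (hl'' : ∀ r ∈ Set.Icc (0:ℝ) R, deriv (deriv l) r ≥ -H ^ 2 * l r)
    (r₀ : ℝ) (hr₀ : r₀ ∈ Set.Ioc (0:ℝ) R) (hr₀' : r₀ < π / H)
    (heq : l r₀ = (2 * π / H) * Real.sin (H * r₀)) :
    ∀ r ∈ Set.Icc (0:ℝ) r₀, l r = (2 * π / H) * Real.sin (H * r) := by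
  set c := 2 * π / H
  have hl_deriv (r : ℝ) : HasDerivAt l (deriv l r) r :=
    (hl.differentiable (by norm_num) r).hasDerivAt
  have hl_deriv2 (r : ℝ) : HasDerivAt (deriv l) (deriv (deriv l) r) r :=
    (hl.differentiable_deriv_two r).hasDerivAt
  have hcH : c * H = 2 * π := div_mul_cancel₀ _ hH.ne'
  have hu := eqOn_zero_of_sin_comparison (u := fun r ↦ l r - c * sin (H * r)) hH
    (by rwa [lt_div_iff₀ hH, mul_comm] at hr₀')
    (fun r ↦ (hl_deriv r).sub ((hasDerivAt_sin_mul r).const_mul c))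
    (fun r ↦ (hl_deriv2 r).sub (((hasDerivAt_cos_mul r).const_mul H).const_mul c))
    (by simp [hl0]) (by simp [hl'0, hcH]) (by simp [heq])
    fun r hr ↦ by linarith [hl'' r ⟨hr.1, hr.2.trans hr₀.2⟩]
  exact fun r hr ↦ sub_eq_zero.1 (hu hr)

/-- Rigidity in the Sturm-type comparison: if `l` is C² with `l 0 = 0`,
`l' 0 = 2π` and `l'' ≥ −H² l` on `[0, R]` (`0 < R ≤ π/H`), and
`l r₀ = (2π/H) sin (H r₀)` for some `r₀ ∈ (0, R]` with `r₀ < π/H`, then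
`l r = (2π/H) sin (H r)` for all `r ∈ [0, r₀]`. -/
theorem length_lower_bound_rigidity
    (H R : ℝ) (hH : 0 < H) (hR : 0 < R) (hRH : R ≤ π / H)
    (l : ℝ → ℝ) (hl : ContDiff ℝ 2 l)
    (hl0 : l 0 = 0) (hl'0 : deriv l 0 = 2 * π)
    (hl'' : ∀ r ∈ Set.Icc (0:ℝ) R, deriv (deriv l) r ≥ -H ^ 2 * l r)
    (r₀ : ℝ) (hr₀ : r₀ ∈ Set.Ioc (0:ℝ) R) (hr₀' : r₀ < π / H)
    (heq : l r₀ = (2 * π / H) * Real.sin (H * r₀)) :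
    ∀ r ∈ Set.Icc (0:ℝ) r₀, l r = (2 * π / H) * Real.sin (H * r) :=
  length_lower_bound_rigidity_general H R hH l hl hl0 hl'0 hl'' r₀ hr₀ hr₀' heq
end

section
/- Let H > 0 and 0 < R < π/H. Define η : [0,R] → ℝ by η(r) = cos(πr/(2R)) and define F(R) = (−(4H²R² − π²)² − (10π²H²R² − π⁴) cos(HR)) / (4H²R²(π² − H²R²)). Then ∫₀^R (4H² η(r)² − η'(r)² + 2(η²)''(r)) · (2π/H) sin(Hr) dr = 4π + π · F(R), where (η²)'' denotes the second derivative of the function r ↦ η(r)². -/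
/-!
The half-angle formula turns the bracket `4H²η² - η'² + 2(η²)''` into `A + B cos (π r / R)` with
`A = 2H² - π²/(8R²)` and `B = 2H² - 7π²/(8R²)`. Against `sin (H r)` the constant integrates to
`(1 - cos (HR)) / H`, and by product-to-sum the cosine term integrates to
`H (1 + cos (HR)) / (H² - π²/R²)`, because `cos ((H ± π/R) R) = -cos (HR)`.
-/

open Real MeasureTheory intervalIntegral

theorem deriv_cos_const_mul (a : ℝ) :
    deriv (fun s => cos (a * s)) = fun r => -(a * sin (a * r)) := by
  funext r
  simpa [mul_comm] using ((hasDerivAt_id' r).const_mul a).cos.deriv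

theorem deriv_deriv_cos_const_mul_sq (a r : ℝ) :
    deriv (deriv fun s => cos (a * s) ^ 2) r = -(2 * a ^ 2 * cos (2 * a * r)) := by
  have half_angle : (fun s => cos (a * s) ^ 2) = fun s => 1 / 2 + cos (2 * a * s) / 2 := by
    funext s
    rw [cos_sq, mul_assoc]
  have first : deriv (fun s => 1 / 2 + cos (2 * a * s) / 2) = fun r => -(a * sin (2 * a * r)) := by
    funext r
    rw [deriv_const_add, deriv_div_const, deriv_cos_const_mul]
    ring
  rw [half_angle, first]
  exact ((((hasDerivAt_id' r).const_mul (2 * a)).sin.const_mul a).neg.deriv).trans (by ring)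

theorem integral_sin_const_mul {c : ℝ} (hc : c ≠ 0) (b : ℝ) :
    ∫ r in (0 : ℝ)..b, sin (c * r) = (1 - cos (c * b)) / c := by
  rw [integral_comp_mul_left (fun x => sin x) hc, integral_sin, mul_zero, cos_zero, smul_eq_mul,
    inv_mul_eq_div]

theorem integral_cos_mul_sin_of_mul_eq_pi {k b H : ℝ} (hkb : k * b = π) (hHk : H ^ 2 ≠ k ^ 2) :
    ∫ r in (0 : ℝ)..b, cos (k * r) * sin (H * r) = H * (1 + cos (H * b)) / (H ^ 2 - k ^ 2) := by
  have hsum : H + k ≠ 0 := fun h => hHk (by rw [eq_neg_of_add_eq_zero_left h]; ring)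
  have hdiff : H - k ≠ 0 := fun h => hHk (by rw [sub_eq_zero.mp h])
  have product_to_sum : (fun r => cos (k * r) * sin (H * r)) =
      fun r => (sin ((H - k) * r) + sin ((H + k) * r)) / 2 := by
    funext r
    rw [sub_mul, add_mul, ← two_mul_sin_mul_cos]
    ring
  have cos_shift_sub : cos ((H - k) * b) = -cos (H * b) := by
    rw [sub_mul, hkb, cos_sub_pi]
  have cos_shift_add : cos ((H + k) * b) = -cos (H * b) := by
    rw [add_mul, hkb, cos_add_pi]
  have hsin (c : ℝ) : IntervalIntegrable (fun r => sin (c * r)) volume 0 b :=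
    (continuous_sin.comp (continuous_const_mul c)).intervalIntegrable 0 b
  rw [product_to_sum, intervalIntegral.integral_div, integral_add (hsin _) (hsin _),
    integral_sin_const_mul hdiff, integral_sin_const_mul hsum, cos_shift_sub, cos_shift_add]
  field_simp
  ring

theorem stability_bracket_cos (H a r : ℝ) :
    4 * H ^ 2 * cos (a * r) ^ 2 - deriv (fun s => cos (a * s)) r ^ 2
        + 2 * deriv (deriv fun s => cos (a * s) ^ 2) r
      = (2 * H ^ 2 - a ^ 2 / 2) + (2 * H ^ 2 - 7 * a ^ 2 / 2) * cos (2 * a * r) := by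
  rw [deriv_cos_const_mul, deriv_deriv_cos_const_mul_sq, neg_sq, mul_pow, sin_sq, cos_sq,
    ← mul_assoc]
  ring

theorem integral_affine_cos_mul_sin_of_mul_eq_pi {A B k b H : ℝ} (hkb : k * b = π)
    (hH : H ≠ 0) (hHk : H ^ 2 ≠ k ^ 2) :
    ∫ r in (0 : ℝ)..b, (A + B * cos (k * r)) * sin (H * r)
      = A * ((1 - cos (H * b)) / H) + B * (H * (1 + cos (H * b)) / (H ^ 2 - k ^ 2)) := by
  have split : (fun r => (A + B * cos (k * r)) * sin (H * r))
      = fun r => A * sin (H * r) + B * (cos (k * r) * sin (H * r)) := by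
    funext r; ring
  have hsin : Continuous fun r => sin (H * r) := by fun_prop
  have hcos_sin : Continuous fun r => cos (k * r) * sin (H * r) := by fun_prop
  rw [split, integral_add ((hsin.const_mul A).intervalIntegrable 0 b)
      ((hcos_sin.const_mul B).intervalIntegrable 0 b),
    intervalIntegral.integral_const_mul, intervalIntegral.integral_const_mul,
    integral_sin_const_mul hH, integral_cos_mul_sin_of_mul_eq_pi hkb hHk]

/-- Evaluation of the stability integral on the test function
`η r = cos (π r / (2R))` against the comparison length `(2π/H) sin (H r)`:
it equals `4π + π F(R)` with the explicit rational function `F`. -/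
theorem stability_integral_value
    (H R : ℝ) (hH : 0 < H) (hR : 0 < R) (hRH : R < π / H) :
    (∫ r in (0:ℝ)..R,
        (4 * H ^ 2 * (Real.cos (π * r / (2 * R))) ^ 2
          - (deriv (fun s => Real.cos (π * s / (2 * R))) r) ^ 2
          + 2 * deriv (deriv (fun s => (Real.cos (π * s / (2 * R))) ^ 2)) r)
        * ((2 * π / H) * Real.sin (H * r)))
    = 4 * π + π *
        ((-(4 * H ^ 2 * R ^ 2 - π ^ 2) ^ 2
            - (10 * π ^ 2 * H ^ 2 * R ^ 2 - π ^ 4) * Real.cos (H * R))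
          / (4 * H ^ 2 * R ^ 2 * (π ^ 2 - H ^ 2 * R ^ 2))) := by
  have hHR : H * R < π := by rw [lt_div_iff₀ hH] at hRH; linarith
  have hk : π / R * R = π := div_mul_cancel₀ π hR.ne'
  have hHk : H ^ 2 ≠ (π / R) ^ 2 :=
    (pow_lt_pow_left₀ ((lt_div_iff₀ hR).mpr hHR) hH.le two_ne_zero).ne
  have as_linear (s : ℝ) : π * s / (2 * R) = π / (2 * R) * s := by ring
  have double : 2 * (π / (2 * R)) = π / R := by field_simp
  simp only [as_linear, stability_bracket_cos, double]
  simp only [mul_left_comm _ (2 * π / H), intervalIntegral.integral_const_mul]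
  rw [integral_affine_cos_mul_sin_of_mul_eq_pi hk hH.ne' hHk]
  have hgap : H ^ 2 * R ^ 2 < π ^ 2 := by nlinarith [mul_pos hH hR]
  field_simp [sub_ne_zero.mpr hgap.ne, sub_ne_zero.mpr hgap.ne']
  ring
end

section
/- Let H > 0 and define F(R) = (−(4H²R² − π²)² − (10π²H²R² − π⁴) cos(HR)) / (4H²R²(π² − H²R²)) for 0 < R < π/H. Then there exists ε > 0 such that F(R) > 0 for every R with π/(2H) < R < π/(2H) + ε. -/
open Real

/- Put `H R = π/2 + s`. Then `cos (H R) = -sin s`, and the numerator of `F` becomes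
`(10π²(π/2 + s)² - π⁴) sin s - 16 s² (π + s)²`: the first term is of order `s` with coefficient
at least `3π³` (from `sin s > 2s/π`), the second of order `s²`, so the numerator is positive for
small `s > 0`, while the denominator stays positive as long as `H R < π`. -/

lemma numerator_pos_of_pos_of_lt {s : ℝ} (hs0 : 0 < s) (hs1 : s < 1 / 10) :
    0 < -(4 * (π / 2 + s) ^ 2 - π ^ 2) ^ 2
      - (10 * π ^ 2 * (π / 2 + s) ^ 2 - π ^ 4) * cos (π / 2 + s) := by
  have hπ3 := pi_gt_three
  have hπ4 := pi_lt_four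
  have hsin : 2 / π * s < sin s := mul_lt_sin hs0 (by linarith)
  have hcoef : 3 / 2 * π ^ 4 ≤ 10 * π ^ 2 * (π / 2 + s) ^ 2 - π ^ 4 := by
    have : 0 ≤ 10 * π ^ 2 * s * (π + s) := by positivity
    linarith [show 10 * π ^ 2 * (π / 2 + s) ^ 2 - π ^ 4 = 3 / 2 * π ^ 4 + 10 * π ^ 2 * s * (π + s)
      by ring]
  have hquad : 16 * s * (π + s) ^ 2 < 3 * π ^ 3 := by nlinarith [pow_pos pi_pos 2]
  rw [add_comm (π / 2), cos_add_pi_div_two, add_comm s, mul_neg, sub_neg_eq_add,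
    neg_add_eq_sub, sub_pos]
  calc (4 * (π / 2 + s) ^ 2 - π ^ 2) ^ 2 = s * (16 * s * (π + s) ^ 2) := by ring
    _ < s * (3 * π ^ 3) := mul_lt_mul_of_pos_left hquad hs0
    _ = 3 / 2 * π ^ 4 * (2 / π * s) := by field_simp
    _ < (10 * π ^ 2 * (π / 2 + s) ^ 2 - π ^ 4) * sin s :=
      mul_lt_mul' hcoef hsin (by positivity) (by linarith [pow_pos pi_pos 4])

lemma quotient_pos_of_mem_Ioo {t : ℝ} (ht : t ∈ Set.Ioo (π / 2) (π / 2 + 1 / 10)) :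
    0 < (-(4 * t ^ 2 - π ^ 2) ^ 2 - (10 * π ^ 2 * t ^ 2 - π ^ 4) * cos t)
      / (4 * t ^ 2 * (π ^ 2 - t ^ 2)) := by
  obtain ⟨s, hs0, hs1, rfl⟩ : ∃ s, 0 < s ∧ s < 1 / 10 ∧ t = π / 2 + s :=
    ⟨t - π / 2, by linarith [ht.1], by linarith [ht.2], by ring⟩
  have hden : 0 < π ^ 2 - (π / 2 + s) ^ 2 := by nlinarith [pi_gt_three]
  exact div_pos (numerator_pos_of_pos_of_lt hs0 hs1) (by positivity)

/-- The function `F(R) = (−(4H²R² − π²)² − (10π²H²R² − π⁴) cos(HR)) /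
(4H²R²(π² − H²R²))`, defined for `0 < R < π/H`, is strictly positive on some
interval `(π/(2H), π/(2H) + ε)`. -/
theorem F_positive_near_half_pi
    (H : ℝ) (hH : 0 < H) (F : ℝ → ℝ)
    (hF : ∀ R ∈ Set.Ioo (0:ℝ) (π / H),
      F R = (-(4 * H ^ 2 * R ^ 2 - π ^ 2) ^ 2
              - (10 * π ^ 2 * H ^ 2 * R ^ 2 - π ^ 4) * Real.cos (H * R))
            / (4 * H ^ 2 * R ^ 2 * (π ^ 2 - H ^ 2 * R ^ 2))) :
    ∃ ε > 0, ∀ R : ℝ, π / (2 * H) < R → R < π / (2 * H) + ε → 0 < F R := by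
  refine ⟨1 / (10 * H), by positivity, fun R h1 h2 => ?_⟩
  have hHR : H * R ∈ Set.Ioo (π / 2) (π / 2 + 1 / 10) := by
    rw [show π / (2 * H) = π / 2 / H by ring, div_lt_iff₀ hH] at h1
    rw [show π / (2 * H) + 1 / (10 * H) = (π / 2 + 1 / 10) / H by ring, lt_div_iff₀ hH] at h2
    constructor <;> linarith
  have hR : R ∈ Set.Ioo 0 (π / H) := by
    rw [Set.mem_Ioo, lt_div_iff₀ hH]
    constructor <;> nlinarith [hHR.1, hHR.2, pi_gt_three]
  rw [hF R hR]
  convert quotient_pos_of_mem_Ioo hHR using 1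
  ring
end

section
/- Let H > 0. Then there exists ε > 0 with π/(2H) + ε < π/H such that for every R with π/(2H) < R < π/(2H) + ε, setting η(r) = cos(πr/(2R)), one has ∫₀^R (4H² η(r)² − η'(r)² + 2(η²)''(r)) · (2π/H) sin(Hr) dr > 4π, where (η²)'' denotes the second derivative of the function r ↦ η(r)². -/
/-!
Writing `b = π/(2R)`, the integrand is a combination of `sin (H r)` and `sin ((H ± 2b) r)`, so the
integral has a closed form, which depends only on `t = H R`: it is `4π + stabilityExcess t`.
The numerator of `stabilityExcess t` is `-cos t · π²(10t² - π²) - (4t² - π²)²`; at `t = π/2` the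
first term vanishes to first order and the second to second order, so the excess is positive for
`t` slightly larger than `π/2`. Jordan's inequality `sin x ≥ 2x/π` makes this hold for
`π/2 < t < π/2 + 1/4`.
-/

open Real MeasureTheory intervalIntegral

lemma deriv_cos_mul (b : ℝ) : deriv (fun s => cos (b * s)) = fun r => -b * sin (b * r) := by
  funext r
  exact ((hasDerivAt_id' r).const_mul b).cos.deriv.trans (by ring)

lemma deriv_cos_mul_sq (b : ℝ) :
    deriv (fun s => cos (b * s) ^ 2) = fun r => -b * sin (2 * b * r) := by
  funext r
  refine (((hasDerivAt_id' r).const_mul b).cos.pow 2).deriv.trans ?_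
  rw [mul_assoc 2 b r, sin_two_mul]
  push_cast
  ring

lemma deriv_deriv_cos_mul_sq (b : ℝ) :
    deriv (deriv fun s => cos (b * s) ^ 2) = fun r => -2 * b ^ 2 * cos (2 * b * r) := by
  rw [deriv_cos_mul_sq]
  funext r
  exact ((((hasDerivAt_id' r).const_mul (2 * b)).sin).const_mul (-b)).deriv.trans (by ring)

lemma integral_sin_mul {k : ℝ} (hk : k ≠ 0) (R : ℝ) :
    ∫ r in (0 : ℝ)..R, sin (k * r) = (1 - cos (k * R)) / k := by
  rw [integral_comp_mul_left (fun x => sin x) hk, integral_sin, mul_zero, cos_zero, smul_eq_mul,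
    inv_mul_eq_div]

lemma stability_integrand_eq (H b r : ℝ) :
    (4 * H ^ 2 * cos (b * r) ^ 2 - (-b * sin (b * r)) ^ 2 + 2 * (-2 * b ^ 2 * cos (2 * b * r)))
        * (2 * π / H * sin (H * r))
      = 2 * π / H * ((2 * H ^ 2 - b ^ 2 / 2) * sin (H * r)
        + (H ^ 2 - 7 * b ^ 2 / 4) * (sin ((H + 2 * b) * r) + sin ((H - 2 * b) * r))) := by
  rw [show (H + 2 * b) * r = H * r + 2 * (b * r) by ring,
    show (H - 2 * b) * r = H * r - 2 * (b * r) by ring, mul_assoc 2 b r,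
    sin_add, sin_sub, cos_two_mul, sin_two_mul]
  linear_combination (-(2 * π / H) * b ^ 2 * sin (H * r)) * sin_sq_add_cos_sq (b * r)

noncomputable def stabilityExcess (t : ℝ) : ℝ :=
  π * (-cos t * π ^ 2 * (10 * t ^ 2 - π ^ 2) - (4 * t ^ 2 - π ^ 2) ^ 2)
    / (4 * t ^ 2 * (π ^ 2 - t ^ 2))

lemma integral_stability_eq {H R : ℝ} (hH : 0 < H) (hR : 0 < R) (hHR : H * R ≠ π) :
    ∫ r in (0 : ℝ)..R,
        (4 * H ^ 2 * cos (π * r / (2 * R)) ^ 2 - deriv (fun s => cos (π * s / (2 * R))) r ^ 2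
          + 2 * deriv (deriv fun s => cos (π * s / (2 * R)) ^ 2) r) * (2 * π / H * sin (H * r))
      = 4 * π + stabilityExcess (H * R) := by
  have hb : ∀ s, π * s / (2 * R) = π / (2 * R) * s := fun s => by ring
  simp only [hb, deriv_cos_mul, deriv_deriv_cos_mul_sq, stability_integrand_eq]
  have hint : ∀ k, IntervalIntegrable (fun r => sin (k * r)) volume 0 R := fun k =>
    (continuous_sin.comp (continuous_const_mul k)).intervalIntegrable 0 R
  have hk₁ : H + 2 * (π / (2 * R)) ≠ 0 := by positivity
  have hk₂ : H - 2 * (π / (2 * R)) ≠ 0 := by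
    rw [sub_ne_zero]
    rintro rfl
    exact hHR (by field_simp)
  rw [intervalIntegral.integral_const_mul,
    integral_add ((hint H).const_mul _) (((hint _).add (hint _)).const_mul _),
    intervalIntegral.integral_const_mul, intervalIntegral.integral_const_mul,
    integral_add (hint _) (hint _),
    integral_sin_mul hH.ne', integral_sin_mul hk₁, integral_sin_mul hk₂]
  have h2bR : 2 * (π / (2 * R)) * R = π := by field_simp
  rw [add_mul H, sub_mul H, h2bR, cos_add_pi, cos_sub_pi]
  have ht : π ^ 2 - H ^ 2 * R ^ 2 ≠ 0 := by
    rw [← mul_pow, sq_sub_sq]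
    exact mul_ne_zero (by positivity) (sub_ne_zero.mpr hHR.symm)
  unfold stabilityExcess
  field_simp
  ring

lemma stabilityExcess_pos {t : ℝ} (h₁ : π / 2 < t) (h₂ : t < π / 2 + 1 / 4) :
    0 < stabilityExcess t := by
  obtain ⟨d, rfl⟩ : ∃ d, t = d + π / 2 := ⟨t - π / 2, by ring⟩
  have hd : 0 < d := by linarith
  have hπ := pi_gt_three
  have hsin : 2 / π * d ≤ -cos (d + π / 2) := by
    rw [cos_add_pi_div_two, neg_neg]
    exact mul_le_sin hd.le (by linarith)
  have hnum : (4 * (d + π / 2) ^ 2 - π ^ 2) ^ 2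
      < -cos (d + π / 2) * π ^ 2 * (10 * (d + π / 2) ^ 2 - π ^ 2) :=
    calc (4 * (d + π / 2) ^ 2 - π ^ 2) ^ 2 = 16 * d ^ 2 * (d + π) ^ 2 := by ring
      _ < 2 / π * d * π ^ 2 * (3 * π ^ 2 / 2) := by
        field_simp
        nlinarith [mul_pos hd (mul_pos pi_pos pi_pos)]
      _ ≤ -cos (d + π / 2) * π ^ 2 * (10 * (d + π / 2) ^ 2 - π ^ 2) := by
        gcongr
        · exact mul_nonneg ((by positivity : 0 ≤ 2 / π * d).trans hsin) (sq_nonneg π)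
        · nlinarith
  have hden : 0 < π ^ 2 - (d + π / 2) ^ 2 := by nlinarith
  unfold stabilityExcess
  exact div_pos (mul_pos pi_pos (sub_pos.mpr hnum)) (by positivity)

/-- Analytic core of the distance estimate: for `R` slightly larger than
`π/(2H)`, the stability integral of the test function `η r = cos (π r/(2R))`
against `(2π/H) sin (H r)` strictly exceeds `4π`. -/
theorem stability_integral_exceeds_four_pi
    (H : ℝ) (hH : 0 < H) :
    ∃ ε > 0, π / (2 * H) + ε < π / H ∧
      ∀ R : ℝ, π / (2 * H) < R → R < π / (2 * H) + ε →
        (∫ r in (0:ℝ)..R,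
            (4 * H ^ 2 * (Real.cos (π * r / (2 * R))) ^ 2
              - (deriv (fun s => Real.cos (π * s / (2 * R))) r) ^ 2
              + 2 * deriv (deriv (fun s => (Real.cos (π * s / (2 * R))) ^ 2)) r)
            * ((2 * π / H) * Real.sin (H * r)))
        > 4 * π := by
  have hπ := pi_gt_three
  refine ⟨1 / (4 * H), by positivity, ?_, fun R hR₁ hR₂ => ?_⟩
  · rw [← sub_pos]
    field_simp
    linarith
  have hR : 0 < R := (by positivity : 0 < π / (2 * H)).trans hR₁
  have ht₁ : π / 2 < H * R :=
    calc π / 2 = H * (π / (2 * H)) := by field_simp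
      _ < H * R := by gcongr
  have ht₂ : H * R < π / 2 + 1 / 4 :=
    calc H * R < H * (π / (2 * H) + 1 / (4 * H)) := by gcongr
      _ = π / 2 + 1 / 4 := by field_simp
  rw [integral_stability_eq hH hR (by linarith)]
  linarith [stabilityExcess_pos ht₁ ht₂]
end
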